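/- In the random key graph K(n; K, P) with K ≤ P and n ≥ 2, for each r = 1,…,n-1 and each positive integer x, the probability of the event A_{n,r} that the subgraph on {1,…,r} is connected and {1,…,r} is isolated from its complement satisfies P[A_{n,r}] ≤ P[U_r ≤ x]·exp(-(n-r)K²/P) + P[C_r]·exp(-(n-r)(K/P)(x+1)), where U_r = |K_1 ∪ ⋯ ∪ K_r| and C_r is the event that the subgraph on {1,…,r} is connected. -/

import Mathlib

/-!
Split a key assignment into the rings of the nodes in `S = {1, …, r}` and those of the other
`n - r` nodes. Given the rings inside `S`, whose union has `U` keys, `S` is isolated iff every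
outside ring avoids these `U` keys, which has probability
`(C(P - U, K) / C(P, K)) ^ (n - r) ≤ exp (-(n - r) K U / P)`. When `S` is connected it is
nonempty, so `U ≥ K`; splitting on `U ≤ x` versus `U ≥ x + 1` gives the two terms.
-/

open Finset

/-- A key ring: a `K`-element subset of the key pool `{1,…,P}`. -/
abbrev KeyRing (P K : ℕ) := {S : Finset (Fin P) // S.card = K}

open Classical in
/-- Probability of an event under independent uniform assignment of key rings
to `n` nodes. -/
noncomputable def pr (n P K : ℕ) (E : (Fin n → KeyRing P K) → Prop) : ℝ :=
  ((Finset.univ : Finset (Fin n → KeyRing P K)).filter (fun κ => E κ)).card /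
    (Fintype.card (Fin n → KeyRing P K) : ℝ)

/-- The random key graph: distinct nodes are adjacent iff their key rings intersect. -/
def rkg {n P K : ℕ} (κ : Fin n → KeyRing P K) : SimpleGraph (Fin n) where
  Adj i j := i ≠ j ∧ ((κ i).1 ∩ (κ j).1).Nonempty
  symm := ⟨fun i j ⟨h1, h2⟩ => ⟨h1.symm, by rwa [Finset.inter_comm]⟩⟩
  loopless := ⟨fun i ⟨h, _⟩ => h rfl⟩

theorem Nat.descFactorial_mul_pow_le_descFactorial_mul_pow {a b : ℕ} (hab : a ≤ b) (k : ℕ) :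
    a.descFactorial k * b ^ k ≤ b.descFactorial k * a ^ k := by
  induction k with
  | zero => simp
  | succ k ih =>
    rw [Nat.descFactorial_succ, Nat.descFactorial_succ, pow_succ, pow_succ]
    have hstep : (a - k) * b ≤ (b - k) * a := by
      rw [Nat.sub_mul, Nat.sub_mul, Nat.mul_comm a b]
      exact Nat.sub_le_sub_left (Nat.mul_le_mul_left k hab) _
    calc (a - k) * a.descFactorial k * (b ^ k * b)
        = ((a - k) * b) * (a.descFactorial k * b ^ k) := by ring
      _ ≤ ((b - k) * a) * (b.descFactorial k * a ^ k) := Nat.mul_le_mul hstep ih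
      _ = (b - k) * b.descFactorial k * (a ^ k * a) := by ring

theorem Nat.choose_mul_pow_le_choose_mul_pow {a b : ℕ} (hab : a ≤ b) (k : ℕ) :
    a.choose k * b ^ k ≤ b.choose k * a ^ k := by
  have h := Nat.descFactorial_mul_pow_le_descFactorial_mul_pow hab k
  rw [Nat.descFactorial_eq_factorial_mul_choose, Nat.descFactorial_eq_factorial_mul_choose,
    Nat.mul_assoc, Nat.mul_assoc] at h
  exact Nat.le_of_mul_le_mul_left h k.factorial_pos

theorem choose_sub_le_choose_mul_exp {P u : ℕ} (hu : u ≤ P) (K : ℕ) :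
    ((P - u).choose K : ℝ) ≤ P.choose K * Real.exp (-(K * u / P)) := by
  rcases Nat.eq_zero_or_pos P with rfl | hP
  · obtain rfl : u = 0 := Nat.le_zero.1 hu
    simp
  have hP' : (0 : ℝ) < P := by exact_mod_cast hP
  have hsub : ((P - u : ℕ) : ℝ) ≤ P * Real.exp (-(u / P)) :=
    calc ((P - u : ℕ) : ℝ) = P * (1 - u / P) := by rw [Nat.cast_sub hu]; field_simp
      _ ≤ P * Real.exp (-(u / P)) := by gcongr; exact Real.one_sub_le_exp_neg _
  refine le_of_mul_le_mul_right ?_ (pow_pos hP' K)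
  calc ((P - u).choose K : ℝ) * (P : ℝ) ^ K ≤ P.choose K * ((P - u : ℕ) : ℝ) ^ K := by
        exact_mod_cast Nat.choose_mul_pow_le_choose_mul_pow (Nat.sub_le P u) K
    _ ≤ P.choose K * (P * Real.exp (-(u / P))) ^ K := by gcongr
    _ = P.choose K * Real.exp (-(K * u / P)) * (P : ℝ) ^ K := by
      rw [mul_pow, ← Real.exp_nat_mul]; ring_nf

theorem Fintype.sum_le_sum_of_fiberwise {γ α β M : Type*}
    [Fintype γ] [Fintype α] [Fintype β] [AddCommMonoid M] [PartialOrder M] [IsOrderedAddMonoid M]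
    (e : γ ≃ α × β) {f g : γ → M}
    (h : ∀ a, ∑ b, f (e.symm (a, b)) ≤ ∑ b, g (e.symm (a, b))) :
    ∑ c, f c ≤ ∑ c, g c := by
  rw [← e.symm.sum_comp f, ← e.symm.sum_comp g, Fintype.sum_prod_type, Fintype.sum_prod_type]
  exact Finset.sum_le_sum fun a _ => h a

section KeyRing

variable {P K : ℕ}

theorem card_keyRing : Fintype.card (KeyRing P K) = P.choose K := by
  rw [Fintype.card_finset_len, Fintype.card_fin]

theorem card_filter_keyRing_disjoint (T : Finset (Fin P)) :
    #{S : KeyRing P K | Disjoint S.1 T} = (P - #T).choose K := by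
  have hval : ({S : KeyRing P K | Disjoint S.1 T} : Finset _).map
      (Function.Embedding.subtype _) = powersetCard K Tᶜ := by
    ext S
    simp [mem_powersetCard, subset_compl_iff_disjoint_right, and_comm]
  rw [← card_map, hval, card_powersetCard, card_compl, Fintype.card_fin]

theorem card_filter_forall_keyRing_disjoint {β : Type*} [Fintype β] [DecidableEq β]
    (T : Finset (Fin P)) :
    #{b : β → KeyRing P K | ∀ j, Disjoint (b j).1 T} =
      (P - #T).choose K ^ Fintype.card β := by
  have hpi : ({b : β → KeyRing P K | ∀ j, Disjoint (b j).1 T} : Finset _) =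
      Fintype.piFinset fun _ => {S : KeyRing P K | Disjoint S.1 T} := by
    ext b; simp [Fintype.mem_piFinset]
  rw [hpi, Fintype.card_piFinset, prod_const, card_univ, card_filter_keyRing_disjoint]

end KeyRing

theorem exp_neg_pow_le_ite_add {m K P u x : ℕ} (hKu : K ≤ u) :
    Real.exp (-(K * u / P)) ^ m ≤
      (if u ≤ x then 1 else 0) * Real.exp (-(m * K ^ 2 / P)) +
        Real.exp (-(m * (K / P) * (x + 1))) := by
  have hc : (0 : ℝ) ≤ m * K / P := by positivity
  rw [← Real.exp_nat_mul, show (m : ℝ) * -(K * u / P) = -(m * K / P * u) by ring]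
  split_ifs with hux
  · have hKu' : (K : ℝ) ≤ u := by exact_mod_cast hKu
    calc Real.exp (-(m * K / P * u)) ≤ Real.exp (-(m * K ^ 2 / P)) := by
          rw [show (m : ℝ) * K ^ 2 / P = m * K / P * K by ring]; gcongr
      _ ≤ _ := by rw [one_mul]; exact le_add_of_nonneg_right (Real.exp_nonneg _)
  · have hxu : (x : ℝ) + 1 ≤ u := by exact_mod_cast Nat.lt_of_not_le hux
    rw [zero_mul, zero_add, show (m : ℝ) * (K / P) * (x + 1) = m * K / P * (x + 1) by ring]
    gcongr

theorem pr_nonneg {n P K : ℕ} (E : (Fin n → KeyRing P K) → Prop) : 0 ≤ pr n P K E := by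
  unfold pr; positivity

section Split

variable {n P K : ℕ} (p : Fin n → Prop)

def IsConnectedOn (κ : Fin n → KeyRing P K) : Prop := ((rkg κ).induce {i | p i}).Connected

def IsIsolatedOn (κ : Fin n → KeyRing P K) : Prop :=
  ∀ i j, p i → ¬ p j → (κ i).1 ∩ (κ j).1 = ∅

variable {p}

theorem isConnectedOn_congr {κ κ' : Fin n → KeyRing P K} (h : ∀ i, p i → κ i = κ' i) :
    IsConnectedOn p κ ↔ IsConnectedOn p κ' := by
  have hG : (rkg κ).induce {i | p i} = (rkg κ').induce {i | p i} := by
    ext ⟨i, hi⟩ ⟨j, hj⟩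
    simp [rkg, h i hi, h j hj]
  rw [IsConnectedOn, IsConnectedOn, hG]

variable (p) [DecidablePred p]

def keysOn (κ : Fin n → KeyRing P K) : Finset (Fin P) :=
  (univ.filter p).biUnion fun i => (κ i).1

abbrev splitKeyRings :
    (Fin n → KeyRing P K) ≃ ({i // p i} → KeyRing P K) × ({i // ¬ p i} → KeyRing P K) :=
  Equiv.piEquivPiSubtypeProd p _

variable {p}

theorem le_card_keysOn {κ : Fin n → KeyRing P K} {i : Fin n} (hi : p i) : K ≤ #(keysOn p κ) :=
  (κ i).2.symm.le.trans <|
    card_le_card (subset_biUnion_of_mem (fun i => (κ i).1) (mem_filter.2 ⟨mem_univ i, hi⟩))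

theorem isIsolatedOn_iff_forall_disjoint_keysOn (κ : Fin n → KeyRing P K) :
    IsIsolatedOn p κ ↔ ∀ j, ¬ p j → Disjoint (κ j).1 (keysOn p κ) := by
  simp only [IsIsolatedOn, keysOn, disjoint_biUnion_right, mem_filter, mem_univ, true_and]
  exact ⟨fun h j hj i hi => disjoint_iff_inter_eq_empty.2 (by rw [inter_comm]; exact h i j hi hj),
    fun h i j hi hj => by rw [inter_comm]; exact disjoint_iff_inter_eq_empty.1 (h j hj i hi)⟩

section Fiber

variable (a : {i // p i} → KeyRing P K)

theorem keysOn_splitKeyRings_symm (b : {i // ¬ p i} → KeyRing P K) :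
    keysOn p ((splitKeyRings p).symm (a, b)) = univ.biUnion fun i => (a i).1 := by
  ext t
  simp only [keysOn, mem_biUnion, mem_filter, mem_univ, true_and, Subtype.exists,
    Equiv.piEquivPiSubtypeProd_symm_apply]
  exact exists_congr fun i => ⟨fun ⟨hi, ht⟩ => ⟨hi, by simpa [hi] using ht⟩,
    fun ⟨hi, ht⟩ => ⟨hi, by simpa [hi] using ht⟩⟩

theorem isConnectedOn_splitKeyRings_symm_iff (b b' : {i // ¬ p i} → KeyRing P K) :
    IsConnectedOn p ((splitKeyRings p).symm (a, b)) ↔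
      IsConnectedOn p ((splitKeyRings p).symm (a, b')) :=
  isConnectedOn_congr fun i hi => by simp [Equiv.piEquivPiSubtypeProd_symm_apply, hi]

open Classical in
theorem card_filter_isIsolatedOn_splitKeyRings_symm :
    #{b | IsIsolatedOn p ((splitKeyRings p).symm (a, b))} =
      (P - #(univ.biUnion fun i => (a i).1)).choose K ^ Fintype.card {i // ¬ p i} := by
  rw [← card_filter_forall_keyRing_disjoint]
  congr 1
  ext b
  simp only [isIsolatedOn_iff_forall_disjoint_keysOn, keysOn_splitKeyRings_symm, mem_filter,
    mem_univ, true_and, Equiv.piEquivPiSubtypeProd_symm_apply, Subtype.forall]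
  exact forall₂_congr fun j hj => by rw [dif_neg hj]

open Classical in
theorem sum_ite_isConnectedOn_isIsolatedOn_le (x : ℕ) :
    ∑ b, (if IsConnectedOn p ((splitKeyRings p).symm (a, b)) ∧
        IsIsolatedOn p ((splitKeyRings p).symm (a, b)) then 1 else 0 : ℝ) ≤
      ∑ b, ((if #(keysOn p ((splitKeyRings p).symm (a, b))) ≤ x then 1 else 0) *
          Real.exp (-(Fintype.card {i // ¬ p i} * K ^ 2 / P)) +
        (if IsConnectedOn p ((splitKeyRings p).symm (a, b)) then 1 else 0) *
          Real.exp (-(Fintype.card {i // ¬ p i} * (K / P) * (x + 1)))) := by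
  rcases isEmpty_or_nonempty ({i // ¬ p i} → KeyRing P K) with _ | ⟨⟨b₀⟩⟩
  · simp
  set T := univ.biUnion fun i => (a i).1 with hT
  have hconn_iff := (isConnectedOn_splitKeyRings_symm_iff a · b₀)
  by_cases hconn : IsConnectedOn p ((splitKeyRings p).symm (a, b₀))
  swap
  · simp only [hconn_iff, hconn, false_and, if_false, sum_const_zero]
    exact sum_nonneg fun b _ => by positivity
  have hKT : K ≤ #T := by
    rw [hT, ← keysOn_splitKeyRings_symm a b₀]; exact le_card_keysOn hconn.nonempty.some.2
  have hTP : #T ≤ P := (card_le_univ T).trans_eq (Fintype.card_fin P)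
  simp only [hconn_iff, hconn, true_and, if_true, keysOn_splitKeyRings_symm, one_mul]
  rw [sum_boole, card_filter_isIsolatedOn_splitKeyRings_symm, sum_const, card_univ,
    Fintype.card_fun, card_keyRing, nsmul_eq_mul]
  push_cast
  calc ((P - #T).choose K : ℝ) ^ Fintype.card {i // ¬ p i}
      ≤ (P.choose K * Real.exp (-(K * #T / P))) ^ Fintype.card {i // ¬ p i} := by
        gcongr; exact choose_sub_le_choose_mul_exp hTP K
    _ ≤ _ := by
        rw [mul_pow]; gcongr; exact exp_neg_pow_le_ite_add hKT

end Fiber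

theorem pr_isConnectedOn_isIsolatedOn_le (x : ℕ) :
    pr n P K (fun κ => IsConnectedOn p κ ∧ IsIsolatedOn p κ) ≤
      pr n P K (fun κ => #(keysOn p κ) ≤ x) *
          Real.exp (-(Fintype.card {i // ¬ p i} * K ^ 2 / P)) +
        pr n P K (IsConnectedOn p) *
          Real.exp (-(Fintype.card {i // ¬ p i} * (K / P) * (x + 1))) := by
  unfold pr
  rw [div_mul_eq_mul_div, div_mul_eq_mul_div, ← add_div]
  gcongr
  rw [← sum_boole, ← sum_boole, ← sum_boole, sum_mul, sum_mul, ← sum_add_distrib]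
  refine Fintype.sum_le_sum_of_fiberwise (splitKeyRings p) fun a => ?_
  convert sum_ite_isConnectedOn_isIsolatedOn_le a x
  rfl

end Split

theorem stmt12_general (n P K r x : ℕ) :
    pr n P K (fun κ =>
        ((rkg κ).induce {i : Fin n | (i : ℕ) < r}).Connected ∧
        ∀ i j : Fin n, (i : ℕ) < r → r ≤ (j : ℕ) → (κ i).1 ∩ (κ j).1 = ∅) ≤
      pr n P K (fun κ =>
          ((Finset.univ.filter (fun i : Fin n => (i : ℕ) < r)).biUnion
            (fun i => (κ i).1)).card ≤ x) *
        Real.exp (-(((n : ℝ) - (r : ℝ)) * (K : ℝ) ^ 2 / (P : ℝ))) +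
      pr n P K (fun κ => ((rkg κ).induce {i : Fin n | (i : ℕ) < r}).Connected) *
        Real.exp (-(((n : ℝ) - (r : ℝ)) * ((K : ℝ) / (P : ℝ)) * ((x : ℝ) + 1))) := by
  have hm : (n : ℝ) - r ≤ Fintype.card {i : Fin n // ¬ (i : ℕ) < r} := by
    rcases le_or_gt r n with h | h
    · rw [Fintype.card_subtype_compl, Fintype.card_fin_lt_of_le h, Fintype.card_fin,
        Nat.cast_sub h]
    · have : (n : ℝ) < r := by exact_mod_cast h
      linarith [(Fintype.card {i : Fin n // ¬ (i : ℕ) < r}).cast_nonneg (α := ℝ)]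
  calc _ = pr n P K (fun κ => IsConnectedOn (fun i : Fin n => (i : ℕ) < r) κ ∧
        IsIsolatedOn (fun i : Fin n => (i : ℕ) < r) κ) := by
        simp only [IsConnectedOn, IsIsolatedOn, not_lt]
    _ ≤ _ := pr_isConnectedOn_isIsolatedOn_le x
    _ ≤ _ := by
        gcongr <;> first | exact pr_nonneg _ | exact le_rfl

/-- The probability that the first `r` nodes form a connected, isolated set is
bounded by `P[U_r ≤ x]·e^{-(n-r)K²/P} + P[C_r]·e^{-(n-r)(K/P)(x+1)}`, where
`U_r` is the number of distinct keys held by nodes `1,…,r` and `C_r` is the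
event that the subgraph induced on `{1,…,r}` is connected. -/
theorem stmt12 (n P K r x : ℕ) (hK : 0 < K) (hKP : K ≤ P) (hn : 2 ≤ n)
    (hr1 : 1 ≤ r) (hrn : r ≤ n - 1) (hx : 0 < x) :
    pr n P K (fun κ =>
        ((rkg κ).induce {i : Fin n | (i : ℕ) < r}).Connected ∧
        ∀ i j : Fin n, (i : ℕ) < r → r ≤ (j : ℕ) → (κ i).1 ∩ (κ j).1 = ∅) ≤
      pr n P K (fun κ =>
          ((Finset.univ.filter (fun i : Fin n => (i : ℕ) < r)).biUnion
            (fun i => (κ i).1)).card ≤ x) *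
        Real.exp (-(((n : ℝ) - (r : ℝ)) * (K : ℝ) ^ 2 / (P : ℝ))) +
      pr n P K (fun κ => ((rkg κ).induce {i : Fin n | (i : ℕ) < r}).Connected) *
        Real.exp (-(((n : ℝ) - (r : ℝ)) * ((K : ℝ) / (P : ℝ)) * ((x : ℝ) + 1))) :=
  stmt12_general n P K r x
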